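/- arXiv:1411.2776 — 7 statements merged into one kernel-verified Lean document; each statement's English description precedes it below -/
import Mathlib

section
/- Let G be a group and θ₁, θ₂ commuting injective group endomorphisms of G such that θ₂(G) has finite index in G. If θ₁(G) ∩ θ₂(G) = θ₁θ₂(G), then θ₁(G)·θ₂(G) = G. -/
open Pointwise

theorem independence_implies_strong_independence_of_finiteIndex {G : Type*} [Group G]
    (θ₁ θ₂ : G →* G)
    (h₁ : Function.Injective θ₁) (h₂ : Function.Injective θ₂)
    (hc : θ₁.comp θ₂ = θ₂.comp θ₁)
    (hfi : θ₂.range.FiniteIndex)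
    (h : θ₁.range ⊓ θ₂.range = (θ₁.comp θ₂).range) :
    (θ₁.range : Set G) * (θ₂.range : Set G) = Set.univ := by
  set H := θ₂.range with hH
  haveI : Finite (G ⧸ H) := H.finite_quotient_of_finiteIndex
  -- induced map on cosets
  have hwd : ∀ g g' : G, (QuotientGroup.mk g : G ⧸ H) = QuotientGroup.mk g' →
      (QuotientGroup.mk (θ₁ g) : G ⧸ H) = QuotientGroup.mk (θ₁ g') := by
    intro g g' hgg
    rw [QuotientGroup.eq] at hgg ⊢
    obtain ⟨x, hx⟩ := hgg
    refine ⟨θ₁ x, ?_⟩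
    have := congrArg (fun f : G →* G => f x) hc
    simp only [MonoidHom.comp_apply] at this
    rw [← this, hx]
    simp
  let f : G ⧸ H → G ⧸ H := fun q =>
    Quotient.liftOn' q (fun g => (QuotientGroup.mk (θ₁ g) : G ⧸ H))
      (fun g g' hgg => hwd g g' (Quotient.sound' hgg))
  have hf : ∀ g : G, f (QuotientGroup.mk g) = QuotientGroup.mk (θ₁ g) := fun g => rfl
  have finj : Function.Injective f := by
    intro a b
    induction a using QuotientGroup.induction_on with
    | H g =>
    induction b using QuotientGroup.induction_on with
    | H g' =>
    intro hab
    rw [hf, hf, QuotientGroup.eq] at hab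
    obtain ⟨x, hx⟩ := hab
    have hmem : (θ₁ g)⁻¹ * θ₁ g' ∈ θ₁.range ⊓ θ₂.range := by
      constructor
      · exact ⟨g⁻¹ * g', by simp⟩
      · exact ⟨x, hx⟩
    rw [h] at hmem
    obtain ⟨y, hy⟩ := hmem
    rw [QuotientGroup.eq]
    refine ⟨y, ?_⟩
    apply h₁
    simp only [MonoidHom.comp_apply] at hy
    have := congrArg (fun f : G →* G => f y) hc
    simp only [MonoidHom.comp_apply] at this
    rw [hy]
    simp
  have fsurj : Function.Surjective f := Finite.surjective_of_injective finj
  ext g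
  simp only [Set.mem_univ, iff_true]
  obtain ⟨q, hq⟩ := fsurj (QuotientGroup.mk g)
  induction q using QuotientGroup.induction_on with
  | H g' =>
  rw [hf, QuotientGroup.eq] at hq
  obtain ⟨x, hx⟩ := hq
  exact ⟨θ₁ g', ⟨g', rfl⟩, θ₂ x, ⟨x, rfl⟩, by rw [hx]; group⟩
end

section
/- Let G be a group and θ₁, θ₂, θ₃ commuting injective group endomorphisms of G. If θ₁(G)·θ₂(G) = G and θ₁(G)·θ₃(G) = G, then θ₁(G)·(θ₂θ₃)(G) = G. -/
open Pointwise

theorem strong_independence_from_factors {G : Type*} [Group G] (θ₁ θ₂ θ₃ : G →* G)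
    (h₁ : Function.Injective θ₁) (h₂ : Function.Injective θ₂) (h₃ : Function.Injective θ₃)
    (hc₁₂ : θ₁.comp θ₂ = θ₂.comp θ₁) (hc₁₃ : θ₁.comp θ₃ = θ₃.comp θ₁)
    (hc₂₃ : θ₂.comp θ₃ = θ₃.comp θ₂)
    (h12 : (θ₁.range : Set G) * (θ₂.range : Set G) = Set.univ)
    (h13 : (θ₁.range : Set G) * (θ₃.range : Set G) = Set.univ) :
    (θ₁.range : Set G) * ((θ₂.comp θ₃).range : Set G) = Set.univ := by
  apply Set.eq_univ_of_forall
  intro g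
  have hg : g ∈ (θ₁.range : Set G) * (θ₂.range : Set G) := by rw [h12]; trivial
  obtain ⟨x, ⟨a, ha⟩, y, ⟨b, hb⟩, hxy⟩ := hg
  have hb' : b ∈ (θ₁.range : Set G) * (θ₃.range : Set G) := by rw [h13]; trivial
  obtain ⟨u, ⟨c, hc⟩, v, ⟨d, hd⟩, huv⟩ := hb'
  refine ⟨θ₁ (a * θ₂ c), ⟨a * θ₂ c, rfl⟩, (θ₂.comp θ₃) d, ⟨d, rfl⟩, ?_⟩
  have hcomm : θ₁ (θ₂ c) = θ₂ (θ₁ c) := DFunLike.congr_fun hc₁₂ c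
  simp only [MonoidHom.comp_apply, map_mul, hcomm]
  rw [hc, hd, mul_assoc, ← map_mul, show u * v = b from huv, hb, ha]
  exact hxy
end

section
/- Let G be a group and θ₁, θ₂, θ₃ commuting injective group endomorphisms of G. If θ₁(G) ∩ (θ₂θ₃)(G) = (θ₁θ₂θ₃)(G), then θ₁(G) ∩ θ₂(G) = (θ₁θ₂)(G) and θ₁(G) ∩ θ₃(G) = (θ₁θ₃)(G). -/
theorem independence_of_product {G : Type*} [Group G] (θ₁ θ₂ θ₃ : G →* G)
    (h₁ : Function.Injective θ₁) (h₂ : Function.Injective θ₂) (h₃ : Function.Injective θ₃)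
    (hc₁₂ : θ₁.comp θ₂ = θ₂.comp θ₁) (hc₁₃ : θ₁.comp θ₃ = θ₃.comp θ₁)
    (hc₂₃ : θ₂.comp θ₃ = θ₃.comp θ₂)
    (h : θ₁.range ⊓ (θ₂.comp θ₃).range = ((θ₁.comp θ₂).comp θ₃).range) :
    θ₁.range ⊓ θ₂.range = (θ₁.comp θ₂).range ∧
      θ₁.range ⊓ θ₃.range = (θ₁.comp θ₃).range := by
  have e12 : ∀ a, θ₁ (θ₂ a) = θ₂ (θ₁ a) := fun a => DFunLike.congr_fun hc₁₂ a
  have e13 : ∀ a, θ₁ (θ₃ a) = θ₃ (θ₁ a) := fun a => DFunLike.congr_fun hc₁₃ a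
  have e23 : ∀ a, θ₂ (θ₃ a) = θ₃ (θ₂ a) := fun a => DFunLike.congr_fun hc₂₃ a
  constructor
  · apply le_antisymm
    · rintro x ⟨⟨a, ha⟩, ⟨b, hb⟩⟩
      have hmem : θ₃ x ∈ θ₁.range ⊓ (θ₂.comp θ₃).range := by
        refine ⟨⟨θ₃ a, ?_⟩, ⟨b, ?_⟩⟩
        · rw [e13, ha]
        · simp only [MonoidHom.comp_apply]
          rw [e23, hb]
      rw [h] at hmem
      obtain ⟨c, hc⟩ := hmem
      simp only [MonoidHom.comp_apply] at hc
      refine ⟨c, ?_⟩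
      simp only [MonoidHom.comp_apply]
      apply h₃
      rw [← hc, ← e13, ← e23]
    · rintro x ⟨c, rfl⟩
      simp only [MonoidHom.comp_apply]
      exact ⟨⟨θ₂ c, rfl⟩, ⟨θ₁ c, (e12 c).symm ▸ rfl⟩⟩
  · apply le_antisymm
    · rintro x ⟨⟨a, ha⟩, ⟨b, hb⟩⟩
      have hmem : θ₂ x ∈ θ₁.range ⊓ (θ₂.comp θ₃).range := by
        refine ⟨⟨θ₂ a, ?_⟩, ⟨b, ?_⟩⟩
        · rw [e12, ha]
        · simp only [MonoidHom.comp_apply]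
          rw [hb]
      rw [h] at hmem
      obtain ⟨c, hc⟩ := hmem
      simp only [MonoidHom.comp_apply] at hc
      refine ⟨c, ?_⟩
      simp only [MonoidHom.comp_apply]
      apply h₂
      rw [← e12]
      exact hc
    · rintro x ⟨c, rfl⟩
      simp only [MonoidHom.comp_apply]
      exact ⟨⟨θ₃ c, rfl⟩, ⟨θ₁ c, (e13 c).symm ▸ rfl⟩⟩
end

section
/- Let G be a group and θ₁, θ₂, θ₃ commuting injective group endomorphisms of G. If θ₁(G) ∩ θ₂(G) = (θ₁θ₂)(G) and θ₁(G) ∩ θ₃(G) = (θ₁θ₃)(G), then θ₁(G) ∩ (θ₂θ₃)(G) = (θ₁θ₂θ₃)(G). -/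
theorem independence_from_factors {G : Type*} [Group G] (θ₁ θ₂ θ₃ : G →* G)
    (h₁ : Function.Injective θ₁) (h₂ : Function.Injective θ₂) (h₃ : Function.Injective θ₃)
    (hc₁₂ : θ₁.comp θ₂ = θ₂.comp θ₁) (hc₁₃ : θ₁.comp θ₃ = θ₃.comp θ₁)
    (hc₂₃ : θ₂.comp θ₃ = θ₃.comp θ₂)
    (h12 : θ₁.range ⊓ θ₂.range = (θ₁.comp θ₂).range)
    (h13 : θ₁.range ⊓ θ₃.range = (θ₁.comp θ₃).range) :
    θ₁.range ⊓ (θ₂.comp θ₃).range = ((θ₁.comp θ₂).comp θ₃).range := by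
  ext x
  simp only [Subgroup.mem_inf, MonoidHom.mem_range, MonoidHom.comp_apply]
  constructor
  · rintro ⟨⟨a, ha⟩, ⟨b, hb⟩⟩
    have hx2 : x ∈ θ₁.range ⊓ θ₂.range := by
      simp only [Subgroup.mem_inf, MonoidHom.mem_range]
      exact ⟨⟨a, ha⟩, ⟨θ₃ b, hb⟩⟩
    rw [h12] at hx2
    obtain ⟨c, hc⟩ := hx2
    simp only [MonoidHom.comp_apply] at hc
    have hcb : θ₁ c = θ₃ b := h₂ (by
      have := DFunLike.congr_fun hc₁₂ c
      simp only [MonoidHom.comp_apply] at this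
      rw [← this, hc, hb])
    have hx3 : θ₁ c ∈ θ₁.range ⊓ θ₃.range := by
      simp only [Subgroup.mem_inf, MonoidHom.mem_range]
      exact ⟨⟨c, rfl⟩, ⟨b, hcb.symm⟩⟩
    rw [h13] at hx3
    obtain ⟨d, hd⟩ := hx3
    simp only [MonoidHom.comp_apply] at hd
    refine ⟨d, ?_⟩
    have : c = θ₃ d := h₁ hd.symm
    rw [← this, hc]
  · rintro ⟨y, hy⟩
    refine ⟨⟨θ₂ (θ₃ y), hy⟩, ⟨θ₁ y, ?_⟩⟩
    have e13 := DFunLike.congr_fun hc₁₃ y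
    have e12 := DFunLike.congr_fun hc₁₂ (θ₃ y)
    simp only [MonoidHom.comp_apply] at e13 e12
    rw [← e13, ← e12, hy]
end

section
/- Let K be a group and η₁, η₂ commuting surjective group endomorphisms of K with finite kernels. Then ker η₁ ∩ ker η₂ = {1} if and only if (ker η₁)·(ker η₂) = ker(η₁ ∘ η₂). -/
open Pointwise

theorem strong_independence_iff_independence_of_finite_kernels {K : Type*} [Group K]
    (η₁ η₂ : K →* K)
    (hs₁ : Function.Surjective η₁) (hs₂ : Function.Surjective η₂)
    (hc : η₁.comp η₂ = η₂.comp η₁)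
    (hf₁ : Finite η₁.ker) (hf₂ : Finite η₂.ker) :
    η₁.ker ⊓ η₂.ker = ⊥ ↔
      (η₁.ker : Set K) * (η₂.ker : Set K) = ((η₁.comp η₂).ker : Set K) := by
  have hcomm : ∀ x : K, η₁ (η₂ x) = η₂ (η₁ x) := fun x => DFunLike.congr_fun hc x
  have hmem : ∀ a : η₁.ker, η₂ (a : K) ∈ η₁.ker := by
    intro a
    have h1 : η₁ (a : K) = 1 := a.2
    simp [MonoidHom.mem_ker, hcomm, h1]
  set f : η₁.ker →* η₁.ker :=
    { toFun := fun a => ⟨η₂ (a : K), hmem a⟩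
      map_one' := by ext; simp
      map_mul' := by intro a b; ext; simp } with hfdef
  have hfval : ∀ a : η₁.ker, (f a : K) = η₂ (a : K) := fun a => rfl
  have hinj : Function.Injective f ↔ η₁.ker ⊓ η₂.ker = ⊥ := by
    constructor
    · intro h
      ext g
      simp only [Subgroup.mem_inf, Subgroup.mem_bot]
      constructor
      · rintro ⟨h1, h2⟩
        have : f ⟨g, h1⟩ = f 1 := by
          ext
          simp [hfval, MonoidHom.mem_ker.mp h2]
        have := h this
        exact congrArg Subtype.val this
      · rintro rfl; simp
    · intro h
      rw [injective_iff_map_eq_one]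
      intro a ha
      have h2 : η₂ (a : K) = 1 := congrArg Subtype.val ha
      have : (a : K) ∈ η₁.ker ⊓ η₂.ker := ⟨a.2, h2⟩
      rw [h, Subgroup.mem_bot] at this
      ext; exact this
  have hsurj : Function.Surjective f ↔
      (η₁.ker : Set K) * (η₂.ker : Set K) = ((η₁.comp η₂).ker : Set K) := by
    constructor
    · intro h
      apply Set.Subset.antisymm
      · rintro z hz
        rw [Set.mem_mul] at hz
        obtain ⟨x, hx, y, hy, rfl⟩ := hz
        have hx' : η₁ x = 1 := hx
        have hy' : η₂ y = 1 := hy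
        show η₁ (η₂ (x * y)) = 1
        rw [map_mul, hy', mul_one, hcomm, hx', map_one]
      · intro z hz
        have hz' : η₁ (η₂ z) = 1 := hz
        obtain ⟨x, hxeq⟩ := h ⟨η₂ z, hz'⟩
        have hx2 : η₂ (x : K) = η₂ z := congrArg Subtype.val hxeq
        rw [Set.mem_mul]
        refine ⟨x, x.2, (x : K)⁻¹ * z, ?_, by group⟩
        show η₂ ((x : K)⁻¹ * z) = 1
        rw [map_mul, map_inv, hx2, inv_mul_cancel]
    · intro h a
      obtain ⟨z, hz⟩ := hs₂ (a : K)
      have hzk : z ∈ ((η₁.comp η₂).ker : Set K) := by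
        show η₁ (η₂ z) = 1
        rw [hz]; exact a.2
      rw [← h, Set.mem_mul] at hzk
      obtain ⟨x, hx, y, hy, hxy⟩ := hzk
      refine ⟨⟨x, hx⟩, ?_⟩
      ext
      rw [hfval]
      show η₂ x = (a : K)
      have hy' : η₂ y = 1 := hy
      calc η₂ x = η₂ x * η₂ y := by rw [hy', mul_one]
        _ = η₂ (x * y) := (map_mul _ _ _).symm
        _ = η₂ z := by rw [hxy]
        _ = (a : K) := hz
  rw [← hinj, hsurj.symm]
  exact ⟨fun h => Finite.surjective_of_injective h, fun h => Finite.injective_iff_surjective.mpr h⟩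
end

section
/- Let G be a group and θ₁, θ₂ commuting injective endomorphisms of G with θ₁(G) ∩ θ₂(G) = (θ₁θ₂)(G). For g, h ∈ G with g⁻¹h ∈ θ₁(G)·θ₂(G), any two elements h', h'' ∈ G satisfying gθ₁(h') ∈ hθ₂(G) and gθ₁(h'') ∈ hθ₂(G) satisfy (h')⁻¹h'' ∈ θ₂(G). -/
open Pointwise

theorem coset_representative_unique_mod {G : Type*} [Group G] (θ₁ θ₂ : G →* G)
    (hi₁ : Function.Injective θ₁) (hi₂ : Function.Injective θ₂)
    (hc : θ₁.comp θ₂ = θ₂.comp θ₁)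
    (hind : θ₁.range ⊓ θ₂.range = (θ₁.comp θ₂).range)
    (g h : G) (hgh : g⁻¹ * h ∈ (θ₁.range : Set G) * (θ₂.range : Set G))
    (h' h'' : G)
    (mem' : g * θ₁ h' ∈ h • (θ₂.range : Set G))
    (mem'' : g * θ₁ h'' ∈ h • (θ₂.range : Set G)) :
    h'⁻¹ * h'' ∈ θ₂.range := by
  obtain ⟨x, ⟨a, ha⟩, hx⟩ := mem'
  obtain ⟨y, ⟨b, hb⟩, hy⟩ := mem''
  have key : θ₁ (h'⁻¹ * h'') = θ₂ (a⁻¹ * b) := by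
    have h1 : g * θ₁ h' = h * θ₂ a := by rw [ha]; exact hx.symm
    have h2 : g * θ₁ h'' = h * θ₂ b := by rw [hb]; exact hy.symm
    have : (g * θ₁ h')⁻¹ * (g * θ₁ h'') = (h * θ₂ a)⁻¹ * (h * θ₂ b) := by
      rw [h1, h2]
    simpa [map_mul, map_inv, mul_assoc] using this
  have hmem : θ₁ (h'⁻¹ * h'') ∈ θ₁.range ⊓ θ₂.range := by
    refine ⟨⟨_, rfl⟩, ⟨a⁻¹ * b, key.symm⟩⟩
  rw [hind] at hmem
  obtain ⟨c, hcc⟩ := hmem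
  exact ⟨c, hi₁ (by simpa using hcc)⟩
end

section
/- Let G be a group, θ₁, θ₂ commuting injective endomorphisms of G, and suppose k₁, k₂ ∈ G satisfy θ₂(k₁)θ₁(k₁)⁻¹ = θ₂(k₂)θ₁(k₂)⁻¹. If moreover θ₁(G) ∩ θ₂(G) = (θ₁θ₂)(G), then k₂⁻¹k₁ ∈ ⋂_{n ∈ ℕ} (θ₁θ₂)ⁿ(G), where (θ₁θ₂)ⁿ denotes the n-fold iterate of the composition θ₁ ∘ θ₂. -/
theorem difference_map_fibre {G : Type*} [Group G] (θ₁ θ₂ : G →* G)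
    (h₁ : Function.Injective θ₁) (h₂ : Function.Injective θ₂)
    (hc : θ₁.comp θ₂ = θ₂.comp θ₁)
    (hind : θ₁.range ⊓ θ₂.range = (θ₁.comp θ₂).range)
    (k₁ k₂ : G) (h : θ₂ k₁ * (θ₁ k₁)⁻¹ = θ₂ k₂ * (θ₁ k₂)⁻¹) :
    ∀ n : ℕ, k₂⁻¹ * k₁ ∈ Set.range (((θ₁ : G → G) ∘ (θ₂ : G → G))^[n]) := by
  have hcomm : ∀ g : G, θ₁ (θ₂ g) = θ₂ (θ₁ g) := fun g => congrFun (congrArg (·.toFun) hc) g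
  -- step lemma
  have L : ∀ a : G, θ₁ a = θ₂ a → ∃ b : G, θ₁ b = a ∧ θ₂ b = a := by
    intro a ha
    have hmem : θ₁ a ∈ θ₁.range ⊓ θ₂.range := ⟨⟨a, rfl⟩, ⟨a, ha.symm⟩⟩
    rw [hind] at hmem
    obtain ⟨b, hb⟩ := hmem
    simp only [MonoidHom.comp_apply] at hb
    have hb1 : θ₂ b = a := h₁ hb
    have hb2 : θ₁ b = a := by
      apply h₂
      rw [← hcomm, hb, ha]
    exact ⟨b, hb2, hb1⟩
  have key : θ₁ (k₂⁻¹ * k₁) = θ₂ (k₂⁻¹ * k₁) := by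
    simp only [map_mul, map_inv]
    have h' : (θ₂ k₂)⁻¹ * (θ₂ k₁ * (θ₁ k₁)⁻¹) * θ₁ k₁
        = (θ₂ k₂)⁻¹ * (θ₂ k₂ * (θ₁ k₂)⁻¹) * θ₁ k₁ := by rw [h]
    group at h'
    group
    exact h'.symm
  -- strengthened induction
  have main : ∀ n : ℕ, ∃ y : G, (((θ₁ : G → G) ∘ (θ₂ : G → G))^[n]) y = k₂⁻¹ * k₁ ∧ θ₁ y = θ₂ y := by
    intro n
    induction n with
    | zero => exact ⟨k₂⁻¹ * k₁, rfl, key⟩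
    | succ n ih =>
      obtain ⟨y, hy, hyeq⟩ := ih
      obtain ⟨b, hb1, hb2⟩ := L y hyeq
      obtain ⟨c, hc1, hc2⟩ := L b (hb1.trans hb2.symm)
      refine ⟨c, ?_, hc1.trans hc2.symm⟩
      rw [Function.iterate_succ_apply]
      have : ((θ₁ : G → G) ∘ (θ₂ : G → G)) c = y := by
        simp only [Function.comp_apply, hc2, hb1]
      rw [this, hy]
  intro n
  obtain ⟨y, hy, -⟩ := main n
  exact ⟨y, hy⟩
end
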